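/- Let (X,S) be a non-degenerate symmetric solution with X finite. The map Y ↦ G_Y (subgroup generated by Y) is a bijection between the set of invariant non-degenerate subsets of (X,S) and the set of standard parabolic subgroups of the structure group G(X,S) equipped with its canonical Garside structure. -/

import Mathlib

def map12 {X : Type*} (T : X × X → X × X) : X × X × X → X × X × X :=
  fun p => ((T (p.1, p.2.1)).1, (T (p.1, p.2.1)).2, p.2.2)

def map23 {X : Type*} (T : X × X → X × X) : X × X × X → X × X × X :=
  fun p => (p.1, (T p.2).1, (T p.2).2)

/-- The defining relations `xy = g_x(y) f_y(x)` of the structure monoid of `(X,S)`. -/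
def ybMonRel {X : Type*} (g f : X → X → X) : FreeMonoid X → FreeMonoid X → Prop :=
  fun a b => ∃ x y : X, a = FreeMonoid.of x * FreeMonoid.of y ∧
    b = FreeMonoid.of (g x y) * FreeMonoid.of (f y x)

section Garside

variable {M : Type*} [Monoid M]

/-- Left divisibility. -/
def LDvd (a b : M) : Prop := ∃ c, b = a * c

/-- Right divisibility. -/
def RDvd (a b : M) : Prop := ∃ c, b = c * a

/-- The set of left divisors of `d`. -/
def LDiv (d : M) : Set M := {a | LDvd a d}

/-- The set of right divisors of `d`. -/
def RDiv (d : M) : Set M := {a | RDvd a d}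

/-- An element is balanced if its left and right divisors coincide. -/
def BalancedElem (d : M) : Prop := LDiv d = RDiv d

/-- `l` is the right lcm (lcm for left divisibility) of the set `A`. -/
def IsRightLcmOfSet (A : Set M) (l : M) : Prop :=
  (∀ a ∈ A, LDvd a l) ∧ ∀ m, (∀ a ∈ A, LDvd a m) → LDvd l m

/-- `l` is the left lcm (lcm for right divisibility) of the set `A`. -/
def IsLeftLcmOfSet (A : Set M) (l : M) : Prop :=
  (∀ a ∈ A, RDvd a l) ∧ ∀ m, (∀ a ∈ A, RDvd a m) → RDvd l m

end Garside

/-- The relators `x y (g_x(y) f_y(x))⁻¹` of the structure group of `(X,S)`. -/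
def structureRels {X : Type*} (g f : X → X → X) : Set (FreeGroup X) :=
  {r | ∃ x y : X, r = FreeGroup.of x * FreeGroup.of y *
    (FreeGroup.of (g x y) * FreeGroup.of (f y x))⁻¹}

/-- A subgroup `H` of the group `G` is a standard parabolic subgroup (with respect to the
Garside element `Δ` of the monoid `M` and the canonical map `ι : M → G`) if it is
generated by the image of a standard parabolic submonoid `M_δ`, where `δ ∈ Div(Δ)` is
balanced, `M_δ` is generated by `Div(δ)`, and `M_δ ∩ Div(Δ) = Div(δ)`. -/
def IsStandardParabolicSubgroup {M G : Type*} [Monoid M] [Group G]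
    (ι : M →* G) (Δ : M) (H : Subgroup G) : Prop :=
  ∃ δ : M, δ ∈ LDiv Δ ∧ BalancedElem δ ∧
    ((Submonoid.closure (LDiv δ) : Set M) ∩ LDiv Δ = LDiv δ) ∧
    H = Subgroup.closure (ι '' (Submonoid.closure (LDiv δ) : Set M))


noncomputable section YBAuxSection
set_option linter.unusedSectionVars false
set_option linter.unusedVariables false
open scoped Classical
open Multiplicative

namespace YBAux
variable {X : Type*} [Fintype X]

def evec (x : X) : X → ℤ := fun z => if z = x then 1 else 0
lemma evec_self (x : X) : evec x x = 1 := by simp [evec]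
lemma evec_ne {x z : X} (h : z ≠ x) : evec x z = 0 := by simp [evec, h]
lemma evec_nonneg (x z : X) : 0 ≤ evec x z := by unfold evec; split <;> simp
lemma evec_le_one (x z : X) : evec x z ≤ 1 := by unfold evec; split <;> simp

def permAct : Equiv.Perm X →* MulAut (Multiplicative (X → ℤ)) where
  toFun σ :=
    { toFun := fun v => ofAdd (fun z => toAdd v (σ.symm z))
      invFun := fun v => ofAdd (fun z => toAdd v (σ z))
      left_inv := by intro v; simp
      right_inv := by intro v; simp
      map_mul' := by intro v w; rfl }
  map_one' := rfl
  map_mul' := by intro σ τ; rfl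

abbrev KK (X : Type*) [Fintype X] :=
  Multiplicative (X → ℤ) ⋊[(permAct : Equiv.Perm X →* _)] Equiv.Perm X

lemma evec_comp (x y : X) (σ : Equiv.Perm X) (h : σ y = x) :
    (fun z => evec y (σ.symm z)) = evec x := by
  funext z
  unfold evec
  by_cases hz : z = x
  · subst hz; rw [if_pos rfl, if_pos]; rw [← h]; simp
  · rw [if_neg hz, if_neg]; intro hc; apply hz; rw [← h, ← hc]; simp

structure Good (X : Type*) [Fintype X] (g f : X → X → X) : Prop where
  hg : ∀ x, Function.Bijective (g x)
  hf : ∀ x, Function.Bijective (f x)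
  Y1 : ∀ x y z, g (g x y) (g (f y x) z) = g x (g y z)
  I1 : ∀ x y, g (g x y) (f y x) = x

variable {g f : X → X → X}

def Good.gE (G : Good X g f) (x : X) : Equiv.Perm X := Equiv.ofBijective (g x) (G.hg x)

lemma Good.gE_apply (G : Good X g f) (x z : X) : G.gE x z = g x z := rfl

/-- the base map into the semidirect product -/
def Good.beta (G : Good X g f) (x : X) : KK X := ⟨ofAdd (evec x), G.gE x⟩

lemma Good.beta_mul (G : Good X g f) (x y : X) :
    G.beta x * G.beta y = G.beta (g x y) * G.beta (f y x) := by
  have hr : G.gE x * G.gE y = G.gE (g x y) * G.gE (f y x) := by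
    ext z
    show g x (g y z) = g (g x y) (g (f y x) z)
    exact (G.Y1 x y z).symm
  have hl : (fun z => evec y ((G.gE x).symm z)) = evec (g x y) := evec_comp _ _ _ rfl
  have hl2 : (fun z => evec (f y x) ((G.gE (g x y)).symm z)) = evec x :=
    evec_comp _ _ _ (G.I1 x y)
  refine SemidirectProduct.ext ?_ hr
  show ofAdd (evec x) * ofAdd (fun z => evec y ((G.gE x).symm z))
      = ofAdd (evec (g x y)) * ofAdd (fun z => evec (f y x) ((G.gE (g x y)).symm z))
  rw [hl, hl2, ← ofAdd_add, ← ofAdd_add, add_comm]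

/-- The monoid morphism from the structure monoid -/
def Good.phi (G : Good X g f) : PresentedMonoid (ybMonRel g f) →* KK X :=
  PresentedMonoid.lift G.beta (by
    rintro a b ⟨x, y, rfl, rfl⟩
    simp only [map_mul, FreeMonoid.lift_eval_of]
    exact G.beta_mul x y)

/-- The group morphism from the structure group -/
def Good.psi (G : Good X g f) : PresentedGroup (structureRels g f) →* KK X :=
  PresentedGroup.toGroup (f := G.beta) (by
    rintro r ⟨x, y, rfl⟩
    simp only [map_mul, map_inv, FreeGroup.lift_apply_of]
    rw [mul_inv_eq_one]
    exact G.beta_mul x y)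

lemma Good.psi_of (G : Good X g f) (x : X) : G.psi (PresentedGroup.of x) = G.beta x :=
  PresentedGroup.toGroup.of _


section Pi
variable (G : Good X g f)

local notation "M'" => PresentedMonoid (ybMonRel g f)

def Good.pi (m : M') : X → ℤ := toAdd (G.phi m).left
def Good.al (m : M') : Equiv.Perm X := (G.phi m).right

lemma Good.pi_one : G.pi 1 = 0 := by
  unfold Good.pi; rw [map_one]; rfl

lemma Good.al_one : G.al 1 = 1 := by
  unfold Good.al; rw [map_one]; rfl

lemma Good.pi_of (x : X) : G.pi (PresentedMonoid.of _ x) = evec x := by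
  unfold Good.pi Good.phi
  rw [PresentedMonoid.lift_of]
  rfl

lemma Good.al_of (x : X) : G.al (PresentedMonoid.of _ x) = G.gE x := by
  unfold Good.al Good.phi
  rw [PresentedMonoid.lift_of]
  rfl

lemma Good.pi_mul (a b : M') :
    G.pi (a * b) = fun z => G.pi a z + G.pi b ((G.al a).symm z) := by
  unfold Good.pi Good.al
  rw [map_mul]
  rfl

lemma Good.al_mul (a b : M') : G.al (a * b) = G.al a * G.al b := by
  unfold Good.al; rw [map_mul]; rfl

lemma rel_mk (x y : X) :
    (PresentedMonoid.of (ybMonRel g f) x) * (PresentedMonoid.of _ y)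
      = (PresentedMonoid.of _ (g x y)) * (PresentedMonoid.of _ (f y x)) := by
  show PresentedMonoid.mk _ _ * PresentedMonoid.mk _ _
      = PresentedMonoid.mk _ _ * PresentedMonoid.mk _ _
  rw [← map_mul, ← map_mul]
  exact Quotient.sound (ConGen.Rel.of _ _ ⟨x, y, rfl, rfl⟩)

lemma Good.pi_nonneg (m : M') : ∀ z, 0 ≤ G.pi m z := by
  obtain ⟨w, rfl⟩ := PresentedMonoid.surjective_mk (rels := ybMonRel g f) m
  induction w using FreeMonoid.recOn with
  | one => rw [map_one, G.pi_one]; intro z; simp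
  | of_mul x w ih =>
    rw [map_mul]
    show ∀ z, 0 ≤ G.pi (PresentedMonoid.of _ x * PresentedMonoid.mk _ w) z
    rw [G.pi_mul]
    intro z
    exact add_nonneg (by rw [G.pi_of]; exact evec_nonneg x z) (ih _)

lemma exists_cons (m : M') :
    m = 1 ∨ ∃ (x : X) (u : M'), m = PresentedMonoid.of _ x * u := by
  obtain ⟨w, rfl⟩ := PresentedMonoid.surjective_mk (rels := ybMonRel g f) m
  induction w using FreeMonoid.recOn with
  | one => exact Or.inl (map_one _)
  | of_mul x w _ => exact Or.inr ⟨x, PresentedMonoid.mk _ w, by rw [map_mul]; rfl⟩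


def Good.len (m : M') : ℤ := ∑ z, G.pi m z

lemma Good.len_mul (a b : M') : G.len (a * b) = G.len a + G.len b := by
  unfold Good.len
  rw [G.pi_mul, Finset.sum_add_distrib]
  congr 1
  exact Equiv.sum_comp (G.al a).symm (G.pi b)

lemma Good.len_of (x : X) : G.len (PresentedMonoid.of _ x) = 1 := by
  unfold Good.len
  rw [G.pi_of]
  rw [Finset.sum_eq_single x]
  · exact evec_self x
  · intro b _ hb; exact evec_ne hb
  · intro h; exact absurd (Finset.mem_univ x) h

lemma Good.len_nonneg (m : M') : 0 ≤ G.len m :=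
  Finset.sum_nonneg fun z _ => G.pi_nonneg m z

lemma Good.len_one : G.len 1 = 0 := by
  unfold Good.len; rw [G.pi_one]; simp

lemma Good.eq_one_of_len (m : M') (h : G.len m = 0) : m = 1 := by
  rcases exists_cons (g:=g) (f:=f) m with h1 | ⟨x, u, rfl⟩
  · exact h1
  · exfalso
    rw [G.len_mul, G.len_of] at h
    have := G.len_nonneg u
    omega

lemma Good.pi_eq_of_eq {a b : M'} (h : a = b) : G.pi a = G.pi b := by rw [h]

lemma Good.pi_cons (x : X) (u : M') :
    G.pi (PresentedMonoid.of _ x * u) = fun z => evec x z + G.pi u ((G.gE x).symm z) := by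
  rw [G.pi_mul, G.al_of, G.pi_of]

lemma Good.pi_mul_apply (a b : M') (z : X) :
    G.pi (a * b) z = G.pi a z + G.pi b ((G.al a).symm z) := by rw [G.pi_mul]

lemma Good.pi_cons_apply (x : X) (u : M') (z : X) :
    G.pi (PresentedMonoid.of _ x * u) z = evec x z + G.pi u ((G.gE x).symm z) := by
  rw [G.pi_cons]


/-- Divisor realization: if `π m` is positive at `x` then `of x` left-divides `m`. -/
lemma Good.drl (m : M') (x : X) (h : 0 < G.pi m x) :
    ∃ u, m = PresentedMonoid.of _ x * u := by
  obtain ⟨w, rfl⟩ := PresentedMonoid.surjective_mk (rels := ybMonRel g f) m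
  induction w using FreeMonoid.recOn generalizing x with
  | one => rw [map_one, G.pi_one] at h; exact absurd h (by simp)
  | of_mul z w ih =>
    rw [map_mul] at h ⊢
    by_cases hxz : x = z
    · exact ⟨PresentedMonoid.mk _ w, by rw [hxz]; rfl⟩
    · rw [show PresentedMonoid.mk (ybMonRel g f) (FreeMonoid.of z) = PresentedMonoid.of _ z
          from rfl, G.pi_cons_apply, evec_ne hxz, zero_add] at h
      obtain ⟨u₂, hu₂⟩ := ih _ h
      refine ⟨PresentedMonoid.of _ (f ((G.gE z).symm x) z) * u₂, ?_⟩
      show PresentedMonoid.of _ z * PresentedMonoid.mk _ w = _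
      rw [hu₂, ← mul_assoc, ← mul_assoc, rel_mk z ((G.gE z).symm x)]
      have hx2 : g z ((G.gE z).symm x) = x := (G.gE z).apply_symm_apply x
      rw [hx2]

/-- π is injective. -/
lemma Good.pi_inj : ∀ (n : ℕ) (a b : M'), G.len a = n → G.pi a = G.pi b → a = b := by
  intro n
  induction n with
  | zero =>
    intro a b ha hab
    have hb : G.len b = 0 := by
      unfold Good.len at *; rw [← hab]; exact ha
    rw [G.eq_one_of_len a ha, G.eq_one_of_len b hb]
  | succ n ih =>
    intro a b ha hab
    have hpos : ∃ x, 0 < G.pi a x := by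
      by_contra hc
      push_neg at hc
      have : G.len a ≤ 0 := Finset.sum_nonpos fun z _ => hc z
      omega
    obtain ⟨x, hx⟩ := hpos
    obtain ⟨a', rfl⟩ := G.drl a x hx
    obtain ⟨b', rfl⟩ := G.drl b x (by rw [← hab]; exact hx)
    have hlen : G.len a' = n := by
      rw [G.len_mul, G.len_of] at ha; omega
    have hpi : G.pi a' = G.pi b' := by
      funext z
      have := congrFun hab (G.gE x z)
      rw [G.pi_cons, G.pi_cons] at this
      simpa using this
    rw [ih a' b' hlen hpi]

lemma Good.pi_inj' {a b : M'} (h : G.pi a = G.pi b) : a = b :=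
  G.pi_inj (G.len a).toNat a b (Int.toNat_of_nonneg (G.len_nonneg a)).symm h

/-- π is surjective onto nonnegative vectors. -/
lemma Good.pi_surj : ∀ (n : ℕ) (v : X → ℤ), (∀ z, 0 ≤ v z) → (∑ z, v z) = n →
    ∃ m : M', G.pi m = v := by
  intro n
  induction n with
  | zero =>
    intro v hv hs
    refine ⟨1, ?_⟩
    rw [G.pi_one]
    funext z
    have := (Finset.sum_eq_zero_iff_of_nonneg (fun z _ => hv z)).1 hs z (Finset.mem_univ z)
    exact this.symm
  | succ n ih =>
    intro v hv hs
    have hpos : ∃ x, 0 < v x := by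
      by_contra hc
      push_neg at hc
      have : (∑ z, v z) ≤ 0 := Finset.sum_nonpos fun z _ => hc z
      omega
    obtain ⟨x, hx⟩ := hpos
    set w : X → ℤ := fun z => v (G.gE x z) - evec x (G.gE x z) with hw
    have hwnn : ∀ z, 0 ≤ w z := by
      intro z
      by_cases hz : G.gE x z = x
      · rw [hw]; dsimp only; rw [hz, evec_self]; omega
      · rw [hw]; dsimp only; rw [evec_ne hz, sub_zero]; exact hv _
    have hws : (∑ z, w z) = n := by
      rw [hw]
      have h1 : (∑ z, (fun t => v t - evec x t) (G.gE x z)) = ∑ z, (v z - evec x z) :=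
        Equiv.sum_comp (G.gE x) (fun t => v t - evec x t)
      dsimp only at h1 ⊢
      rw [h1, Finset.sum_sub_distrib]
      have : (∑ z, evec x z) = 1 := by
        rw [Finset.sum_eq_single x]
        · exact evec_self x
        · intro b _ hb; exact evec_ne hb
        · intro h; exact absurd (Finset.mem_univ x) h
      omega
    obtain ⟨m', hm'⟩ := ih w hwnn hws
    refine ⟨PresentedMonoid.of _ x * m', ?_⟩
    rw [G.pi_cons, hm']
    funext z
    rw [hw]
    dsimp only
    rw [(G.gE x).apply_symm_apply]
    omega


-- needs LDvd etc from problem statement: assume defined above in final file; here re-declare for dev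
section DvdDev
end DvdDev

lemma Good.ldvd_iff {a m : M'} : (∃ c, m = a * c) ↔ ∀ z, G.pi a z ≤ G.pi m z := by
  constructor
  · rintro ⟨c, rfl⟩ z
    rw [G.pi_mul_apply]
    have := G.pi_nonneg c ((G.al a).symm z)
    omega
  · intro h
    set v : X → ℤ := fun z => G.pi m (G.al a z) - G.pi a (G.al a z) with hv
    have hvnn : ∀ z, 0 ≤ v z := fun z => by
      rw [hv]; dsimp only; have := h (G.al a z); omega
    obtain ⟨c, hc⟩ := G.pi_surj (∑ z, v z).toNat v hvnn
      (Int.toNat_of_nonneg (Finset.sum_nonneg fun z _ => hvnn z)).symm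
    refine ⟨c, G.pi_inj' ?_⟩
    funext z
    rw [G.pi_mul]
    dsimp only
    rw [hc, hv]
    dsimp only
    rw [(G.al a).apply_symm_apply]
    omega

lemma Good.cancel_left (GG : Good X g f) {a b c : M'} (h : a * b = a * c) : b = c := by
  apply GG.pi_inj'
  have hp := GG.pi_eq_of_eq h
  funext z
  have := congrFun hp (GG.al a z)
  rw [GG.pi_mul_apply, GG.pi_mul_apply, (GG.al a).symm_apply_apply] at this
  omega

lemma Good.of_inj (GG : Good X g f) {x y : X}
    (h : PresentedMonoid.of (ybMonRel g f) x = PresentedMonoid.of _ y) :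
    x = y := by
  have := GG.pi_eq_of_eq h
  rw [GG.pi_of, GG.pi_of] at this
  by_contra hc
  have h1 := congrFun this x
  rw [evec_self, evec_ne hc] at h1
  omega


section Perms

lemma perm_image_eq (σ : Equiv.Perm X) (Y : Set X) (h : ∀ y ∈ Y, σ y ∈ Y) : σ '' Y = Y :=
  Set.eq_of_subset_of_ncard_le (by rintro t ⟨y, hy, rfl⟩; exact h y hy)
    (le_of_eq (Set.ncard_image_of_injective Y σ.injective).symm) (Set.toFinite Y)

lemma perm_mem_iff {σ : Equiv.Perm X} {Y : Set X} (h : ∀ y ∈ Y, σ y ∈ Y) {z : X} :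
    z ∈ Y ↔ σ z ∈ Y := by
  constructor
  · exact h z
  · intro hz
    have himg := perm_image_eq σ Y h
    rw [← himg] at hz
    obtain ⟨w, hw, hwz⟩ := hz
    rwa [← σ.injective hwz]

lemma perm_symm_mem_iff {σ : Equiv.Perm X} {Y : Set X} (h : ∀ y ∈ Y, σ y ∈ Y) {z : X} :
    σ.symm z ∈ Y ↔ z ∈ Y := by
  rw [perm_mem_iff h (z := σ.symm z), σ.apply_symm_apply]

end Perms

/-- The diagonal map. -/
def Good.T (w : X) : X := (G.gE w).symm w

lemma Good.fT (GG : Good X g f) (w : X) : f (GG.T w) w = GG.T w := by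
  have h1 : g w (GG.T w) = w := (GG.gE w).apply_symm_apply w
  have h2 := GG.I1 w (GG.T w)
  rw [h1] at h2
  exact (GG.hg w).1 (by rw [h2, h1])

lemma Good.T_inj (GG : Good X g f) : Function.Injective GG.T := by
  intro w1 w2 h
  have h1 := GG.fT w1
  have h2 := GG.fT w2
  rw [h] at h1
  exact (GG.hf (GG.T w2)).1 (by rw [h1, h2])

/-- indicator vector of a set -/
def indY (Y : Set X) : X → ℤ := fun z => if z ∈ Y then 1 else 0

lemma indY_mem {Y : Set X} {z : X} (h : z ∈ Y) : indY Y z = 1 := by simp [indY, h]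
lemma indY_not_mem {Y : Set X} {z : X} (h : z ∉ Y) : indY Y z = 0 := by simp [indY, h]
lemma indY_nonneg (Y : Set X) (z : X) : 0 ≤ indY Y z := by unfold indY; split <;> simp
lemma indY_le_one (Y : Set X) (z : X) : indY Y z ≤ 1 := by unfold indY; split <;> simp
lemma mem_of_indY_pos {Y : Set X} {z : X} (h : 0 < indY Y z) : z ∈ Y := by
  by_contra hc; rw [indY_not_mem hc] at h; omega

section Inv

variable {Y : Set X} (hgY : ∀ ⦃x⦄, x ∈ Y → ∀ ⦃z⦄, z ∈ Y → g x z ∈ Y)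

lemma Good.gE_mem_iff (GG : Good X g f)
    (hgY : ∀ ⦃x⦄, x ∈ Y → ∀ ⦃z⦄, z ∈ Y → g x z ∈ Y) {x : X} (hx : x ∈ Y) {z : X} :
    z ∈ Y ↔ GG.gE x z ∈ Y :=
  perm_mem_iff (fun y hy => hgY hx hy)

lemma Good.gE_symm_mem_iff (GG : Good X g f)
    (hgY : ∀ ⦃x⦄, x ∈ Y → ∀ ⦃z⦄, z ∈ Y → g x z ∈ Y) {x : X} (hx : x ∈ Y) {z : X} :
    (GG.gE x).symm z ∈ Y ↔ z ∈ Y :=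
  perm_symm_mem_iff (fun y hy => hgY hx hy)

lemma Good.T_mem (GG : Good X g f)
    (hgY : ∀ ⦃x⦄, x ∈ Y → ∀ ⦃z⦄, z ∈ Y → g x z ∈ Y) {w : X} (hw : w ∈ Y) : GG.T w ∈ Y :=
  (GG.gE_symm_mem_iff hgY hw).2 hw

lemma Good.T_surjOn (GG : Good X g f)
    (hgY : ∀ ⦃x⦄, x ∈ Y → ∀ ⦃z⦄, z ∈ Y → g x z ∈ Y) {t : X} (ht : t ∈ Y) :
    ∃ w ∈ Y, GG.T w = t := by
  have himg : GG.T '' Y = Y :=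
    Set.eq_of_subset_of_ncard_le (by rintro s ⟨w, hw, rfl⟩; exact GG.T_mem hgY hw)
      (le_of_eq (Set.ncard_image_of_injective Y GG.T_inj).symm) (Set.toFinite Y)
  rw [← himg] at ht
  obtain ⟨w, hw, hwt⟩ := ht
  exact ⟨w, hw, hwt⟩

/-- the submonoid generated by the generators in `Y` -/
def NY (Y : Set X) : Submonoid (PresentedMonoid (ybMonRel g f)) :=
  Submonoid.closure ((PresentedMonoid.of (ybMonRel g f)) '' Y)

/-- decomposition: an element whose support lies in an invariant set is a product of
generators from that set. -/
lemma Good.mem_NY_of_supp (GG : Good X g f)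
    (hgY : ∀ ⦃x⦄, x ∈ Y → ∀ ⦃z⦄, z ∈ Y → g x z ∈ Y) :
    ∀ (n : ℕ) (a : PresentedMonoid (ybMonRel g f)), GG.len a = n →
      (∀ x, 0 < GG.pi a x → x ∈ Y) → a ∈ NY Y := by
  intro n
  induction n with
  | zero => intro a ha _; rw [GG.eq_one_of_len a ha]; exact one_mem _
  | succ n ih =>
    intro a ha hsupp
    have hpos : ∃ x, 0 < GG.pi a x := by
      by_contra hc
      push_neg at hc
      have : GG.len a ≤ 0 := Finset.sum_nonpos fun z _ => hc z
      omega
    obtain ⟨x, hx⟩ := hpos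
    have hxY : x ∈ Y := hsupp x hx
    obtain ⟨a', rfl⟩ := GG.drl a x hx
    have hlen : GG.len a' = n := by rw [GG.len_mul, GG.len_of] at ha; omega
    have hsupp' : ∀ z, 0 < GG.pi a' z → z ∈ Y := by
      intro z hz
      have hzz : GG.pi (PresentedMonoid.of _ x * a') (GG.gE x z) = evec x (GG.gE x z)
          + GG.pi a' z := by
        rw [GG.pi_cons_apply, (GG.gE x).symm_apply_apply]
      have hev := evec_nonneg x (GG.gE x z)
      have hmem : GG.gE x z ∈ Y := by
        apply hsupp
        rw [hzz]; omega
      exact (GG.gE_mem_iff hgY hxY).2 hmem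
    exact mul_mem (Submonoid.subset_closure ⟨x, hxY, rfl⟩) (ih a' hlen hsupp')

lemma Good.supp_of_mem_NY (GG : Good X g f)
    (hgY : ∀ ⦃x⦄, x ∈ Y → ∀ ⦃z⦄, z ∈ Y → g x z ∈ Y)
    {a : PresentedMonoid (ybMonRel g f)} (ha : a ∈ NY Y) :
    (∀ x, 0 < GG.pi a x → x ∈ Y) ∧ (∀ z, z ∈ Y ↔ GG.al a z ∈ Y) := by
  induction ha using Submonoid.closure_induction with
  | mem m hm =>
    obtain ⟨y, hy, rfl⟩ := hm
    constructor
    · intro x hx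
      rw [GG.pi_of] at hx
      by_cases hxy : x = y
      · rwa [hxy]
      · rw [evec_ne hxy] at hx; omega
    · intro z
      rw [GG.al_of]
      exact GG.gE_mem_iff hgY hy
  | one =>
    constructor
    · intro x hx; rw [GG.pi_one] at hx; simp at hx
    · intro z; rw [GG.al_one]; rfl
  | mul a b _ _ iha ihb =>
    constructor
    · intro x hx
      rw [GG.pi_mul_apply] at hx
      have h1 := GG.pi_nonneg a x
      have h2 := GG.pi_nonneg b ((GG.al a).symm x)
      rcases lt_or_ge 0 (GG.pi a x) with h | h
      · exact iha.1 x h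
      · have hb : 0 < GG.pi b ((GG.al a).symm x) := by omega
        have := ihb.1 _ hb
        have hsymm : (GG.al a).symm x ∈ Y ↔ x ∈ Y := by
          rw [iha.2 ((GG.al a).symm x), (GG.al a).apply_symm_apply]
        exact hsymm.1 this
    · intro z
      rw [GG.al_mul]
      rw [ihb.2 z, iha.2 (GG.al b z)]
      rw [Equiv.Perm.mul_apply]


lemma Good.mem_ldiv_iff (GG : Good X g f) {a d : M'} :
    a ∈ LDiv d ↔ ∀ z, GG.pi a z ≤ GG.pi d z := GG.ldvd_iff

lemma Good.pi_Delta (GG : Good X g f) {Δ : M'}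
    (hΔr : IsRightLcmOfSet (Set.range (PresentedMonoid.of (ybMonRel g f))) Δ) :
    GG.pi Δ = fun _ => 1 := by
  obtain ⟨u, hu⟩ := GG.pi_surj (Fintype.card X) (fun _ => 1) (fun z => by norm_num)
    (by simp)
  have h1 : ∀ x : X, ∀ z, GG.pi (PresentedMonoid.of (ybMonRel g f) x) z ≤ GG.pi u z := by
    intro x z
    rw [GG.pi_of, hu]
    exact evec_le_one x z
  have hΔu : LDvd Δ u := hΔr.2 u (by
    rintro a ⟨x, rfl⟩
    exact GG.ldvd_iff.2 (h1 x))
  have hle : ∀ z, GG.pi Δ z ≤ 1 := by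
    intro z
    have := GG.ldvd_iff.1 hΔu z
    rw [hu] at this
    exact this
  have hge : ∀ z, 1 ≤ GG.pi Δ z := by
    intro z
    have hdvd := hΔr.1 (PresentedMonoid.of _ z) ⟨z, rfl⟩
    have := GG.ldvd_iff.1 hdvd z
    rw [GG.pi_of, evec_self] at this
    exact this
  funext z
  exact le_antisymm (hle z) (hge z)

section Delta
variable {Y : Set X}

lemma Good.mem_NY_of_le_ind (GG : Good X g f)
    (hgY : ∀ ⦃x⦄, x ∈ Y → ∀ ⦃z⦄, z ∈ Y → g x z ∈ Y)
    {a : M'} (ha : ∀ z, GG.pi a z ≤ indY Y z) : a ∈ NY Y := by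
  apply GG.mem_NY_of_supp hgY (GG.len a).toNat a (Int.toNat_of_nonneg (GG.len_nonneg a)).symm
  intro x hx
  apply mem_of_indY_pos (Y := Y) (z := x)
  have := ha x
  omega

lemma Good.rdiv_le_ind (GG : Good X g f)
    (hgY : ∀ ⦃x⦄, x ∈ Y → ∀ ⦃z⦄, z ∈ Y → g x z ∈ Y)
    {d : M'} (hd : GG.pi d = indY Y) {a : M'} (ha : a ∈ RDiv d) :
    ∀ z, GG.pi a z ≤ indY Y z := by
  obtain ⟨c, hc⟩ := ha
  have hpt : ∀ z, indY Y z = GG.pi c z + GG.pi a ((GG.al c).symm z) := by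
    intro z
    rw [← hd, hc, GG.pi_mul_apply]
  have hcle : ∀ z, GG.pi c z ≤ indY Y z := by
    intro z
    have h1 := hpt z
    have h2 := GG.pi_nonneg a ((GG.al c).symm z)
    omega
  have hcNY : c ∈ NY Y := GG.mem_NY_of_le_ind hgY hcle
  have halc := (GG.supp_of_mem_NY hgY hcNY).2
  intro t
  have h1 := hpt (GG.al c t)
  rw [(GG.al c).symm_apply_apply] at h1
  have h2 := GG.pi_nonneg c (GG.al c t)
  by_cases ht : t ∈ Y
  · have : GG.al c t ∈ Y := (halc t).1 ht
    rw [indY_mem ht]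
    rw [indY_mem this] at h1
    omega
  · have : GG.al c t ∉ Y := fun hc2 => ht ((halc t).2 hc2)
    rw [indY_not_mem ht]
    rw [indY_not_mem this] at h1
    omega

lemma Good.extension (GG : Good X g f)
    (hgY : ∀ ⦃x⦄, x ∈ Y → ∀ ⦃z⦄, z ∈ Y → g x z ∈ Y)
    {d : M'} (hd : GG.pi d = indY Y) :
    ∀ (n : ℕ) (a : M'), (∀ z, GG.pi a z ≤ indY Y z) →
      (∑ z, (indY Y z - GG.pi a z)) = n → ∃ c, d = c * a := by
  intro n
  induction n with
  | zero =>
    intro a ha hs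
    refine ⟨1, ?_⟩
    rw [one_mul]
    apply GG.pi_inj'
    rw [hd]
    funext z
    have := (Finset.sum_eq_zero_iff_of_nonneg
      (fun z _ => by have := ha z; omega : ∀ z ∈ Finset.univ, 0 ≤ indY Y z - GG.pi a z)).1 hs z
      (Finset.mem_univ z)
    omega
  | succ n ih =>
    intro a ha hs
    have hpos : ∃ t, 0 < indY Y t - GG.pi a t := by
      by_contra hc
      push_neg at hc
      have : (∑ z, (indY Y z - GG.pi a z)) ≤ 0 := Finset.sum_nonpos fun z _ => hc z
      omega
    obtain ⟨t, ht0⟩ := hpos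
    have htY : t ∈ Y := by
      apply mem_of_indY_pos (Y := Y) (z := t)
      have := GG.pi_nonneg a t
      omega
    have hat : GG.pi a t = 0 := by
      have h1 := indY_le_one Y t
      have h2 := GG.pi_nonneg a t
      omega
    obtain ⟨w, hwY, hwt⟩ := GG.T_surjOn hgY htY
    set b := PresentedMonoid.of (ybMonRel g f) w * a with hb
    have hble : ∀ z, GG.pi b z ≤ indY Y z := by
      intro z
      rw [hb, GG.pi_cons_apply]
      by_cases hzw : z = w
      · subst hzw
        rw [evec_self]
        have : (GG.gE z).symm z = GG.T z := rfl
        rw [this, hwt, hat, indY_mem hwY]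
        norm_num
      · rw [evec_ne hzw, zero_add]
        have hsymm : (GG.gE w).symm z ∈ Y ↔ z ∈ Y := GG.gE_symm_mem_iff hgY hwY
        by_cases hz : z ∈ Y
        · have := ha ((GG.gE w).symm z)
          rw [indY_mem (hsymm.2 hz)] at this
          rwa [indY_mem hz]
        · have := ha ((GG.gE w).symm z)
          rw [indY_not_mem (fun hc2 => hz (hsymm.1 hc2))] at this
          rwa [indY_not_mem hz]
    have hbsum : (∑ z, (indY Y z - GG.pi b z)) = n := by
      have hlb : GG.len b = GG.len a + 1 := by
        rw [hb, GG.len_mul, GG.len_of]; omega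
      have e1 : (∑ z, (indY Y z - GG.pi b z)) = (∑ z, indY Y z) - GG.len b := by
        rw [Finset.sum_sub_distrib]; rfl
      have e2 : (∑ z, (indY Y z - GG.pi a z)) = (∑ z, indY Y z) - GG.len a := by
        rw [Finset.sum_sub_distrib]; rfl
      omega
    obtain ⟨c', hc'⟩ := ih b hble hbsum
    exact ⟨c' * PresentedMonoid.of _ w, by rw [hc', hb, mul_assoc]⟩

/-- everything needed about `δ_Y` -/
lemma Good.delta_balanced (GG : Good X g f)
    (hgY : ∀ ⦃x⦄, x ∈ Y → ∀ ⦃z⦄, z ∈ Y → g x z ∈ Y)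
    {d : M'} (hd : GG.pi d = indY Y) : BalancedElem d := by
  apply Set.eq_of_subset_of_subset
  · rintro a ha
    have hle : ∀ z, GG.pi a z ≤ indY Y z := by
      intro z; have := GG.mem_ldiv_iff.1 ha z; rwa [hd] at this
    obtain ⟨c, hc⟩ := GG.extension hgY hd
      (∑ z, (indY Y z - GG.pi a z)).toNat a hle
      (Int.toNat_of_nonneg (Finset.sum_nonneg fun z _ => by have := hle z; omega)).symm
    exact ⟨c, hc⟩
  · rintro a ha
    have := GG.rdiv_le_ind hgY hd ha
    apply GG.mem_ldiv_iff.2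
    intro z
    rw [hd]
    exact this z


end Delta

section Delta2
variable {Y : Set X}

lemma Good.ldiv_subset_NY (GG : Good X g f)
    (hgY : ∀ ⦃x⦄, x ∈ Y → ∀ ⦃z⦄, z ∈ Y → g x z ∈ Y)
    {d : M'} (hd : GG.pi d = indY Y) : LDiv d ⊆ ((NY (g:=g) (f:=f) Y : Submonoid M') : Set M') := by
  intro a ha
  apply GG.mem_NY_of_le_ind hgY
  intro z
  have := GG.mem_ldiv_iff.1 ha z
  rwa [hd] at this

lemma Good.mclosure_ldiv (GG : Good X g f)
    (hgY : ∀ ⦃x⦄, x ∈ Y → ∀ ⦃z⦄, z ∈ Y → g x z ∈ Y)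
    {d : M'} (hd : GG.pi d = indY Y) :
    Submonoid.closure (LDiv d) = NY (g:=g) (f:=f) Y := by
  apply le_antisymm
  · exact Submonoid.closure_le.2 (GG.ldiv_subset_NY hgY hd)
  · apply Submonoid.closure_le.2
    rintro m ⟨y, hy, rfl⟩
    apply Submonoid.subset_closure
    apply GG.mem_ldiv_iff.2
    intro z
    rw [GG.pi_of, hd]
    by_cases hzy : z = y
    · subst hzy; rw [evec_self, indY_mem hy]
    · rw [evec_ne hzy]; exact indY_nonneg Y z

lemma Good.closure_cond (GG : Good X g f)
    (hgY : ∀ ⦃x⦄, x ∈ Y → ∀ ⦃z⦄, z ∈ Y → g x z ∈ Y)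
    {d Δ : M'} (hd : GG.pi d = indY Y) (hΔ1 : GG.pi Δ = fun _ => 1) :
    (Submonoid.closure (LDiv d) : Set M') ∩ LDiv Δ = LDiv d := by
  apply Set.eq_of_subset_of_subset
  · rintro m ⟨hm1, hm2⟩
    rw [GG.mclosure_ldiv hgY hd] at hm1
    have hsupp := (GG.supp_of_mem_NY hgY hm1).1
    apply GG.mem_ldiv_iff.2
    intro z
    rw [hd]
    have hle1 : GG.pi m z ≤ 1 := by
      have := GG.mem_ldiv_iff.1 hm2 z
      rwa [hΔ1] at this
    by_cases hz : z ∈ Y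
    · rw [indY_mem hz]; exact hle1
    · rw [indY_not_mem hz]
      have h0 : ¬ (0 < GG.pi m z) := fun hpos => hz (hsupp z hpos)
      omega
  · intro a ha
    refine ⟨Submonoid.subset_closure ha, ?_⟩
    apply GG.mem_ldiv_iff.2
    intro z
    rw [hΔ1]
    dsimp only
    have h1 := GG.mem_ldiv_iff.1 ha z
    rw [hd] at h1
    have h2 := indY_le_one Y z
    omega

lemma Good.mem_ldiv_delta (GG : Good X g f)
    {d Δ : M'} (hd : GG.pi d = indY Y) (hΔ1 : GG.pi Δ = fun _ => 1) : d ∈ LDiv Δ := by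
  apply GG.mem_ldiv_iff.2
  intro z
  rw [hd, hΔ1]
  exact indY_le_one Y z

end Delta2
end Inv

section GroupLevel

lemma subgroup_closure_mclosure {H : Type*} [Group H] (s : Set H) :
    Subgroup.closure ((Submonoid.closure s : Submonoid H) : Set H) = Subgroup.closure s := by
  apply le_antisymm
  · apply (Subgroup.closure_le _).2
    have : Submonoid.closure s ≤ (Subgroup.closure s).toSubmonoid :=
      Submonoid.closure_le.2 Subgroup.subset_closure
    exact this
  · exact Subgroup.closure_mono Submonoid.subset_closure

lemma closure_image_NY
    (ι : PresentedMonoid (ybMonRel g f) →* PresentedGroup (structureRels g f))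
    (hι : ∀ x : X, ι (PresentedMonoid.of (ybMonRel g f) x) = PresentedGroup.of x)
    (Y : Set X) :
    Subgroup.closure (ι '' ((NY (g:=g) (f:=f) Y : Submonoid (PresentedMonoid (ybMonRel g f))) : Set (PresentedMonoid (ybMonRel g f))))
      = Subgroup.closure ((fun x => (PresentedGroup.of x : PresentedGroup (structureRels g f))) '' Y) := by
  have h1 : ι '' ((NY (g:=g) (f:=f) Y : Submonoid (PresentedMonoid (ybMonRel g f))) : Set (PresentedMonoid (ybMonRel g f)))
      = ((Submonoid.closure ((fun x => (PresentedGroup.of x : PresentedGroup (structureRels g f))) '' Y)) : Set (PresentedGroup (structureRels g f))) := by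
    rw [← Submonoid.coe_map, NY, MonoidHom.map_mclosure, ← Set.image_comp,
      show (⇑ι ∘ PresentedMonoid.of (ybMonRel g f))
          = (fun x : X => (PresentedGroup.of x : PresentedGroup (structureRels g f)))
        from funext fun x => hι x]
  rw [h1, subgroup_closure_mclosure]

end GroupLevel

section KY

/-- the subgroup of `KK X` of elements supported on `Y` whose permutation part preserves `Y`. -/
def KY (Y : Set X) : Subgroup (KK X) where
  carrier := {k | (∀ x, toAdd k.left x ≠ 0 → x ∈ Y) ∧ (∀ z, z ∈ Y ↔ k.right z ∈ Y)}
  one_mem' := ⟨fun x hx => absurd rfl hx, fun z => Iff.rfl⟩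
  mul_mem' := by
    rintro a b ⟨ha1, ha2⟩ ⟨hb1, hb2⟩
    constructor
    · intro x hx
      have hx' : toAdd a.left x + toAdd b.left ((a.right).symm x) ≠ 0 := hx
      by_cases h1 : toAdd a.left x = 0
      · have h2 : toAdd b.left ((a.right).symm x) ≠ 0 := by
          intro hc; apply hx'; rw [h1, hc]; ring
        have := hb1 _ h2
        have hs : (a.right).symm x ∈ Y ↔ x ∈ Y := by
          rw [ha2 ((a.right).symm x), (a.right).apply_symm_apply]
        exact hs.1 this
      · exact ha1 x h1
    · intro z
      have hmr : (a * b).right = a.right * b.right := rfl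
      rw [hmr, Equiv.Perm.mul_apply, hb2 z]
      exact ha2 (b.right z)
  inv_mem' := by
    rintro a ⟨ha1, ha2⟩
    constructor
    · intro x hx
      have hx' : -(toAdd a.left (a.right x)) ≠ 0 := hx
      have h2 : toAdd a.left (a.right x) ≠ 0 := fun hc => hx' (by rw [hc]; ring)
      exact (ha2 x).2 (ha1 _ h2)
    · intro z
      have := ha2 ((a.right).symm z)
      rw [(a.right).apply_symm_apply] at this
      exact this.symm

lemma Good.closure_le_KY (GG : Good X g f) {Y : Set X}
    (hgY : ∀ ⦃x⦄, x ∈ Y → ∀ ⦃z⦄, z ∈ Y → g x z ∈ Y) :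
    Subgroup.closure ((fun x => (PresentedGroup.of x : PresentedGroup (structureRels g f))) '' Y)
      ≤ (KY Y).comap GG.psi := by
  apply (Subgroup.closure_le _).2
  rintro m ⟨y, hy, rfl⟩
  show GG.psi (PresentedGroup.of y) ∈ KY Y
  rw [GG.psi_of]
  constructor
  · intro x hx
    by_cases hxy : x = y
    · rwa [hxy]
    · exfalso
      apply hx
      show evec y x = 0
      exact evec_ne hxy
  · intro z
    exact GG.gE_mem_iff hgY hy

lemma Good.mem_of_of_mem_closure (GG : Good X g f) {Y : Set X}
    (hgY : ∀ ⦃x⦄, x ∈ Y → ∀ ⦃z⦄, z ∈ Y → g x z ∈ Y) {x : X}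
    (hx : (PresentedGroup.of x : PresentedGroup (structureRels g f))
        ∈ Subgroup.closure ((fun x => (PresentedGroup.of x : PresentedGroup (structureRels g f))) '' Y)) :
    x ∈ Y := by
  have := GG.closure_le_KY hgY hx
  rw [Subgroup.mem_comap, GG.psi_of] at this
  apply this.1 x
  show evec x x ≠ 0
  rw [evec_self]
  omega

end KY

section Surj

lemma Good.pi_eq_ind_supp (GG : Good X g f) {Δ d : M'}
    (hΔ1 : GG.pi Δ = fun _ => 1) (hdΔ : d ∈ LDiv Δ) :
    GG.pi d = indY {t | 0 < GG.pi d t} := by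
  funext z
  have h1 : GG.pi d z ≤ 1 := by
    have := GG.mem_ldiv_iff.1 hdΔ z; rw [hΔ1] at this; exact this
  have h2 := GG.pi_nonneg d z
  by_cases hz : 0 < GG.pi d z
  · rw [indY_mem (show z ∈ {t | 0 < GG.pi d t} from hz)]; omega
  · rw [indY_not_mem (show z ∉ {t | 0 < GG.pi d t} from hz)]; omega

lemma Good.of_mem_ldiv_of_pos (GG : Good X g f) {d : M'} {x : X}
    (hx : 0 < GG.pi d x) : PresentedMonoid.of (ybMonRel g f) x ∈ LDiv d := by
  apply GG.mem_ldiv_iff.2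
  intro z
  rw [GG.pi_of]
  by_cases hzx : z = x
  · subst hzx; rw [evec_self]; omega
  · rw [evec_ne hzx]; exact GG.pi_nonneg d z

lemma Good.Z_inv (GG : Good X g f) {Δ d : M'}
    (hΔ1 : GG.pi Δ = fun _ => 1) (hdΔ : d ∈ LDiv Δ) (hbal : BalancedElem d)
    (hclos : (Submonoid.closure (LDiv d) : Set M') ∩ LDiv Δ = LDiv d)
    {x y : X} (hx : 0 < GG.pi d x) (hy : 0 < GG.pi d y) :
    0 < GG.pi d (g x y) ∧ 0 < GG.pi d (f y x) := by
  have hofx := GG.of_mem_ldiv_of_pos hx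
  have hofy := GG.of_mem_ldiv_of_pos hy
  by_cases hgxy : g x y = x
  · have hrel := rel_mk (g := g) (f := f) x y
    rw [hgxy] at hrel
    have h2 : PresentedMonoid.of (ybMonRel g f) y = PresentedMonoid.of _ (f y x) :=
      GG.cancel_left hrel
    have h3 : y = f y x := GG.of_inj h2
    constructor
    · rwa [hgxy]
    · rwa [← h3]
  · set m := PresentedMonoid.of (ybMonRel g f) x * PresentedMonoid.of _ y with hm
    have hpim : GG.pi m = fun z => evec x z + evec (g x y) z := by
      funext z
      rw [hm, GG.pi_cons_apply, GG.pi_of]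
      have h := congrFun (evec_comp (g x y) y (GG.gE x) rfl) z
      rw [show evec y ((GG.gE x).symm z) = evec (g x y) z from h]
    have hmΔ : m ∈ LDiv Δ := by
      apply GG.mem_ldiv_iff.2
      intro z
      rw [hΔ1, hpim]
      dsimp only
      by_cases hzx : z = x
      · subst hzx
        rw [evec_self, evec_ne (fun hc : z = g z y => hgxy hc.symm)]
        omega
      · rw [evec_ne hzx]
        have := evec_le_one (g x y) z
        omega
    have hmd : m ∈ LDiv d := by
      rw [← hclos]
      exact ⟨mul_mem (Submonoid.subset_closure hofx) (Submonoid.subset_closure hofy), hmΔ⟩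
    have hgpos : 0 < GG.pi d (g x y) := by
      have := GG.mem_ldiv_iff.1 hmd (g x y)
      rw [hpim] at this
      dsimp only at this
      rw [evec_self, evec_ne hgxy] at this
      omega
    refine ⟨hgpos, ?_⟩
    have hmr : m ∈ RDiv d := by rw [← hbal]; exact hmd
    obtain ⟨c, hcd⟩ := hmr
    rw [hm, rel_mk (g := g) (f := f) x y, ← mul_assoc] at hcd
    have hfr : PresentedMonoid.of (ybMonRel g f) (f y x) ∈ RDiv d :=
      ⟨c * PresentedMonoid.of _ (g x y), hcd⟩
    have hfl : PresentedMonoid.of (ybMonRel g f) (f y x) ∈ LDiv d := by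
      rw [hbal]; exact hfr
    have := GG.mem_ldiv_iff.1 hfl (f y x)
    rw [GG.pi_of, evec_self] at this
    omega

end Surj
end Pi
end YBAux
end YBAuxSection

open YBAux in
/-- Theorem A: for a finite non-degenerate symmetric solution `(X,S)`,
the map `Y ↦ G_Y` (the subgroup generated by `Y`) is a one-to-one correspondence between
the invariant (non-degenerate) subsets of `(X,S)` and the standard parabolic subgroups of
the structure group `G(X,S)` with its canonical Garside structure. -/
theorem invariant_subsets_biject_standard_parabolics {X : Type*} [Fintype X]
    (S : X × X → X × X) (g f : X → X → X)
    (hS : ∀ x y, S (x, y) = (g x y, f y x))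
    (hbij : Function.Bijective S)
    (hinv : S ∘ S = id)
    (hbraid : map12 S ∘ map23 S ∘ map12 S = map23 S ∘ map12 S ∘ map23 S)
    (hg : ∀ x, Function.Bijective (g x)) (hf : ∀ x, Function.Bijective (f x))
    (Δ : PresentedMonoid (ybMonRel g f))
    (hΔbal : BalancedElem Δ)
    (hΔr : IsRightLcmOfSet (Set.range (PresentedMonoid.of (ybMonRel g f))) Δ)
    (hΔl : IsLeftLcmOfSet (Set.range (PresentedMonoid.of (ybMonRel g f))) Δ)
    (ι : PresentedMonoid (ybMonRel g f) →* PresentedGroup (structureRels g f))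
    (hι : ∀ x : X, ι (PresentedMonoid.of (ybMonRel g f) x) = PresentedGroup.of x) :
    Set.BijOn
      (fun Y : Set X =>
        Subgroup.closure
          ((fun x => (PresentedGroup.of x : PresentedGroup (structureRels g f))) '' Y))
      {Y : Set X | ∀ p : X × X, p ∈ Y ×ˢ Y → S p ∈ Y ×ˢ Y}
      {H : Subgroup (PresentedGroup (structureRels g f)) |
        IsStandardParabolicSubgroup ι Δ H} := by
  -- derive the pointwise identities
  have hI : ∀ x y, g (g x y) (f y x) = x ∧ f (f y x) (g x y) = y := by
    intro x y
    have h := congrFun hinv (x, y)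
    simp only [Function.comp_apply, hS, id_eq] at h
    rw [Prod.mk.injEq] at h
    exact h
  have hY1 : ∀ x y z, g (g x y) (g (f y x) z) = g x (g y z) := by
    intro x y z
    have h := congrFun hbraid (x, y, z)
    simp only [Function.comp_apply, map12, map23, hS] at h
    rw [Prod.mk.injEq] at h
    exact h.1
  have GG : Good X g f := ⟨hg, hf, hY1, fun x y => (hI x y).1⟩
  have hΔ1 : GG.pi Δ = fun _ => 1 := GG.pi_Delta hΔr
  -- invariance unpacking
  have hgYof : ∀ (Y : Set X), (∀ p : X × X, p ∈ Y ×ˢ Y → S p ∈ Y ×ˢ Y) →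
      ∀ ⦃x⦄, x ∈ Y → ∀ ⦃z⦄, z ∈ Y → g x z ∈ Y := by
    intro Y hY x hx z hz
    have := hY (x, z) (Set.mk_mem_prod hx hz)
    rw [hS] at this
    exact this.1
  refine ⟨?_, ?_, ?_⟩
  · -- MapsTo
    intro Y hY
    have hgY := hgYof Y hY
    obtain ⟨d, hd⟩ := GG.pi_surj ((∑ z, indY Y z).toNat) (indY Y) (indY_nonneg Y)
      (Int.toNat_of_nonneg (Finset.sum_nonneg fun z _ => indY_nonneg Y z)).symm
    refine ⟨d, GG.mem_ldiv_delta hd hΔ1, GG.delta_balanced hgY hd,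
      GG.closure_cond hgY hd hΔ1, ?_⟩
    show Subgroup.closure _ = _
    rw [GG.mclosure_ldiv hgY hd, closure_image_NY ι hι Y]
  · -- InjOn
    intro Y1 h1 Y2 h2 heq
    have heq' : Subgroup.closure
        ((fun x => (PresentedGroup.of x : PresentedGroup (structureRels g f))) '' Y1)
        = Subgroup.closure
        ((fun x => (PresentedGroup.of x : PresentedGroup (structureRels g f))) '' Y2) := heq
    apply Set.Subset.antisymm
    · intro x hx
      apply GG.mem_of_of_mem_closure (hgYof Y2 h2)
      rw [← heq']
      exact Subgroup.subset_closure ⟨x, hx, rfl⟩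
    · intro x hx
      apply GG.mem_of_of_mem_closure (hgYof Y1 h1)
      rw [heq']
      exact Subgroup.subset_closure ⟨x, hx, rfl⟩
  · -- SurjOn
    intro H hH
    obtain ⟨d, hdΔ, hbal, hclos, hHeq⟩ := hH
    set Z : Set X := {t | 0 < GG.pi d t} with hZ
    have hdZ : GG.pi d = indY Z := GG.pi_eq_ind_supp hΔ1 hdΔ
    have hZinv : ∀ p : X × X, p ∈ Z ×ˢ Z → S p ∈ Z ×ˢ Z := by
      rintro ⟨x, y⟩ ⟨hx, hy⟩
      rw [hS]
      exact GG.Z_inv hΔ1 hdΔ hbal hclos hx hy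
    refine ⟨Z, hZinv, ?_⟩
    show Subgroup.closure _ = H
    rw [hHeq, GG.mclosure_ldiv (hgYof Z hZinv) hdZ, closure_image_NY ι hι Z]
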